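/- Let Σ be a finite alphabet with |Σ| = k, and let U and V be commutative group languages over Σ recognized by DFAs with n and m states, respectively. Then the shuffle U ⧢ V is recognized by a DFA with at most (nm)^k states. -/

import Mathlib

open List

def IsCommutativeLang {α : Type} (L : Language α) : Prop :=
  ∀ u v : List α, u ~ v → (u ∈ L ↔ v ∈ L)

def UpClosure {α : Type} (L : Language α) : Language α :=
  {v | ∃ u ∈ L, u <+ v}

def DownClosure {α : Type} (L : Language α) : Language α :=
  {u | ∃ v ∈ L, u <+ v}

def UpInterior {α : Type} (L : Language α) : Language α :=
  {w | ∃ U : Language α, (∀ x ∈ U, x ∈ L) ∧ UpClosure U = U ∧ w ∈ U}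

def DownInterior {α : Type} (L : Language α) : Language α :=
  {w | ∃ U : Language α, (∀ x ∈ U, x ∈ L) ∧ DownClosure U = U ∧ w ∈ U}

def RecognizedBy {α : Type} (L : Language α) (n : ℕ) : Prop :=
  ∃ (σ : Type) (_ : Fintype σ) (M : DFA α σ), Fintype.card σ = n ∧ M.accepts = L

noncomputable def sc {α : Type} (L : Language α) : ℕ :=
  sInf {n | RecognizedBy L n}

def Nerode {α : Type} (L : Language α) (u v : List α) : Prop :=
  ∀ x : List α, u ++ x ∈ L ↔ v ++ x ∈ L

inductive IsShuffle {α : Type} : List α → List α → List α → Prop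
  | nil : IsShuffle [] [] []
  | left (x : α) {u v w : List α} : IsShuffle u v w → IsShuffle (x :: u) v (x :: w)
  | right (y : α) {u v w : List α} : IsShuffle u v w → IsShuffle u (y :: v) (y :: w)

def Shuffle {α : Type} (U V : Language α) : Language α :=
  {w | ∃ u ∈ U, ∃ v ∈ V, IsShuffle u v w}

def IsPermDFA {α σ : Type} (M : DFA α σ) : Prop :=
  ∀ a : α, Function.Bijective fun q => M.step q a

def IsGroupLang {α : Type} (L : Language α) : Prop :=
  ∃ (σ : Type) (_ : Fintype σ) (M : DFA α σ), IsPermDFA M ∧ M.accepts = L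

def wpow {α : Type} (w : List α) (n : ℕ) : List α :=
  (List.replicate n w).flatten

def IsAperiodicDFA {α σ : Type} (M : DFA α σ) : Prop :=
  ∀ (q : σ) (w : List α) (n : ℕ), 1 ≤ n → M.evalFrom q (wpow w n) = q → M.evalFrom q w = q

def IsAperiodicLang {α : Type} (L : Language α) : Prop :=
  ∃ (σ : Type) (_ : Fintype σ) (M : DFA α σ), IsAperiodicDFA M ∧ M.accepts = L

def ShuffleList {α : Type} : List (Language α) → Language α
  | [] => {([] : List α)}
  | L :: Ls => Shuffle L (ShuffleList Ls)

def UnaryGroupLang {α : Type} (a : α) (U : Language α) : Prop :=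
  (∀ w ∈ U, ∀ x ∈ w, x = a) ∧
  ∃ (σ : Type) (_ : Fintype σ) (M : DFA Unit σ), IsPermDFA M ∧
    ∀ n : ℕ, (List.replicate n a ∈ U ↔ List.replicate n () ∈ M.accepts)

def UnaryAperiodicLang {α : Type} (a : α) (U : Language α) : Prop :=
  (∀ w ∈ U, ∀ x ∈ w, x = a) ∧
  ∃ (σ : Type) (_ : Fintype σ) (M : DFA Unit σ), IsAperiodicDFA M ∧
    ∀ n : ℕ, (List.replicate n a ∈ U ↔ List.replicate n () ∈ M.accepts)

/-!
A commutative language is determined by the Parikh vectors of its words, and for commutative `U`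
and `V` the Parikh image of `U ⧢ V` is the sum of those of `U` and `V`. In a permutation automaton
each letter `a` brings the initial state back after some `d ≤ n` steps, so the Parikh image of `U`
is `d`-periodic in the `a`-coordinate; likewise for `V` with some `e ≤ m`. By the two-coin
(Chicken McNugget) theorem the sum of the two images is then periodic in that coordinate with
period `gcd d e` from `lcm d e + gcd d e - 2` on. Counting every letter up to this threshold and
then cyclically modulo `gcd d e` takes `lcm d e + 2 gcd d e - 2 ≤ d e ≤ n m` states per letter.
-/

namespace Nat

theorem exists_mul_add_mul_eq_of_gcd_dvd {p q n : ℕ} (hdvd : p.gcd q ∣ n)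
    (hle : p.lcm q + p.gcd q ≤ n + p + q) : ∃ a b, a * p + b * q = n := by
  obtain ⟨p', q', hcop, hp, hq⟩ := exists_coprime p q
  obtain ⟨g, hg⟩ : ∃ g, p.gcd q = g := ⟨_, rfl⟩
  rw [hg] at hp hq hdvd hle
  obtain ⟨s, rfl⟩ := hdvd
  subst hp hq
  rcases Nat.eq_zero_or_pos g with rfl | hg0
  · exact ⟨0, 0, by simp⟩
  rw [lcm_mul_right, hcop.lcm_eq_mul] at hle
  have hs : p'.pred * q'.pred ≤ s := by
    have : p' * q' + 1 ≤ s + p' + q' := Nat.le_of_mul_le_mul_right (by linarith) hg0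
    rcases p' with _ | x
    · simp
    rcases q' with _ | y
    · simp
    simp only [Nat.pred_succ]
    nlinarith
  obtain ⟨a, b, hab⟩ := exists_add_mul_eq_of_gcd_dvd_of_mul_pred_le p' q' s
    (by rw [hcop.gcd_eq_one]; exact one_dvd s) hs
  exact ⟨a, b, by rw [← hab]; ring⟩

theorem add_le_lcm_add_gcd {d e : ℕ} (hd : 0 < d) (he : 0 < e) : d + e ≤ d.lcm e + d.gcd e := by
  have hg : 0 < d.gcd e := gcd_pos_of_pos_left e hd
  have hgd : d.gcd e ≤ d := gcd_le_left e hd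
  have hge : d.gcd e ≤ e := le_of_dvd he (gcd_dvd_right d e)
  nlinarith [gcd_mul_lcm d e]

theorem lcm_add_two_mul_gcd_le {d e : ℕ} (hd : 0 < d) (he : 0 < e) :
    d.lcm e + 2 * d.gcd e ≤ d * e + 2 := by
  have hgl : d.gcd e ≤ d.lcm e :=
    le_of_dvd (lcm_pos hd he) ((gcd_dvd_left d e).trans (dvd_lcm_left d e))
  rw [← gcd_mul_lcm d e]
  rcases Nat.lt_or_ge (d.gcd e) 2 with h | h
  · obtain h1 : d.gcd e = 1 := by have := gcd_pos_of_pos_left e hd; omega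
    rw [h1]; omega
  · nlinarith

end Nat

theorem exists_add_eq_of_modEq_gcd {d e : ℕ} (hd : 0 < d) (he : 0 < e) {R : ℕ → ℕ → Prop}
    (hRd : ∀ x₁ x₂ y, x₁ ≡ x₂ [MOD d] → R x₁ y → R x₂ y)
    (hRe : ∀ x y₁ y₂, y₁ ≡ y₂ [MOD e] → R x y₁ → R x y₂)
    {k₁ k₂ : ℕ} (hk : k₁ ≡ k₂ [MOD d.gcd e]) (hk₂ : d.lcm e + d.gcd e ≤ k₂ + 2)
    (h : ∃ x y, x + y = k₁ ∧ R x y) : ∃ x y, x + y = k₂ ∧ R x y := by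
  obtain ⟨x, y, rfl, hxy⟩ := h
  have hx : x % d ≡ x [MOD d] := Nat.mod_modEq x d
  have hy : y % e ≡ y [MOD e] := Nat.mod_modEq y e
  have hxd : x % d < d := Nat.mod_lt x hd
  have hye : y % e < e := Nat.mod_lt y he
  have hle : x % d + y % e ≤ k₂ := by have := Nat.add_le_lcm_add_gcd hd he; omega
  -- reduce `x, y` modulo `d, e`: the gap to `k₂` is then a multiple of `gcd d e` large enough
  -- to be a sum of multiples of `d` and `e`
  have hdvd : d.gcd e ∣ k₂ - (x % d + y % e) :=
    (Nat.modEq_iff_dvd' hle).mp <| (((hx.of_dvd (Nat.gcd_dvd_left d e)).add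
      (hy.of_dvd (Nat.gcd_dvd_right d e))).trans hk)
  obtain ⟨i, j, hij⟩ := Nat.exists_mul_add_mul_eq_of_gcd_dvd hdvd (by omega)
  refine ⟨x % d + i * d, y % e + j * e, by omega, ?_⟩
  have hx' : x ≡ x % d + i * d [MOD d] := hx.symm.trans (Nat.add_mul_mod_self_right _ _ _).symm
  have hy' : y ≡ y % e + j * e [MOD e] := hy.symm.trans (Nat.add_mul_mod_self_right _ _ _).symm
  exact hRe _ _ _ hy' (hRd _ _ _ hx' hxy)

open Function Pointwise

section CountVectors

variable {α : Type} [DecidableEq α]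

def IsEventuallyPeriodicIn (S : Set (α → ℕ)) (a : α) (T p : ℕ) : Prop :=
  ∀ c k₁ k₂, T ≤ k₁ → T ≤ k₂ → k₁ ≡ k₂ [MOD p] → (update c a k₁ ∈ S ↔ update c a k₂ ∈ S)

theorem update_mem_add_iff {P Q : Set (α → ℕ)} (c : α → ℕ) (a : α) (k : ℕ) :
    update c a k ∈ P + Q ↔ ∃ x y, x + y = k ∧
      ∃ p q : α → ℕ, update p a x ∈ P ∧ update q a y ∈ Q ∧ ∀ b ≠ a, p b + q b = c b := by
  constructor
  · rintro ⟨p, hp, q, hq, hpq⟩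
    refine ⟨p a, q a, by simpa using congrFun hpq a, p, q, by rwa [update_eq_self],
      by rwa [update_eq_self], fun b hb => by simpa [hb] using congrFun hpq b⟩
  · rintro ⟨x, y, rfl, p, q, hp, hq, hpq⟩
    refine ⟨_, hp, _, hq, funext fun b => ?_⟩
    rcases eq_or_ne b a with rfl | hb
    · simp
    · simp [hb, hpq b hb]

theorem IsEventuallyPeriodicIn.add {P Q : Set (α → ℕ)} {a : α} {d e : ℕ}
    (hP : IsEventuallyPeriodicIn P a 0 d) (hQ : IsEventuallyPeriodicIn Q a 0 e)
    (hd : 0 < d) (he : 0 < e) :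
    IsEventuallyPeriodicIn (P + Q) a (d.lcm e + d.gcd e - 2) (d.gcd e) := by
  intro c k₁ k₂ h₁ h₂ hk
  let R x y := ∃ p q : α → ℕ, update p a x ∈ P ∧ update q a y ∈ Q ∧ ∀ b ≠ a, p b + q b = c b
  have hRd : ∀ x₁ x₂ y, x₁ ≡ x₂ [MOD d] → R x₁ y → R x₂ y := by
    rintro x₁ x₂ y h ⟨p, q, hp, hq, hpq⟩
    exact ⟨p, q, (hP p x₁ x₂ (Nat.zero_le _) (Nat.zero_le _) h).mp hp, hq, hpq⟩
  have hRe : ∀ x y₁ y₂, y₁ ≡ y₂ [MOD e] → R x y₁ → R x y₂ := by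
    rintro x y₁ y₂ h ⟨p, q, hp, hq, hpq⟩
    exact ⟨p, q, hp, (hQ q y₁ y₂ (Nat.zero_le _) (Nat.zero_le _) h).mp hq, hpq⟩
  rw [update_mem_add_iff, update_mem_add_iff]
  exact ⟨exists_add_eq_of_modEq_gcd hd he hRd hRe hk (by omega),
    exists_add_eq_of_modEq_gcd hd he hRd hRe hk.symm (by omega)⟩

end CountVectors

theorem IsShuffle.perm_append {α : Type} {u v w : List α} (h : IsShuffle u v w) : w ~ u ++ v := by
  induction h with
  | nil => exact .nil
  | left x _ ih => exact ih.cons x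
  | right y _ ih => exact (ih.cons y).trans List.perm_middle.symm

section Parikh

variable {α : Type} [DecidableEq α]

theorem exists_isShuffle_of_perm_append {u v w : List α} (h : w ~ u ++ v) :
    ∃ u' v', u' ~ u ∧ v' ~ v ∧ IsShuffle u' v' w := by
  induction w generalizing u v with
  | nil =>
    obtain ⟨rfl, rfl⟩ := List.append_eq_nil_iff.mp (List.nil_perm.mp h)
    exact ⟨[], [], .nil, .nil, .nil⟩
  | cons b w ih =>
    rcases List.mem_append.mp (h.subset List.mem_cons_self) with hb | hb
    · obtain ⟨u', v', hu, hv, hs⟩ :=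
        ih (h.trans ((List.perm_cons_erase hb).append_right v)).cons_inv
      exact ⟨b :: u', v', (hu.cons b).trans (List.perm_cons_erase hb).symm, hv, .left b hs⟩
    · obtain ⟨u', v', hu, hv, hs⟩ :=
        ih (h.trans (((List.perm_cons_erase hb).append_left u).trans List.perm_middle)).cons_inv
      exact ⟨u', b :: v', hu, (hv.cons b).trans (List.perm_cons_erase hb).symm, .right b hs⟩

def parikh (w : List α) : α → ℕ := fun a => w.count a

theorem parikh_append (u v : List α) : parikh (u ++ v) = parikh u + parikh v :=
  funext fun _ => List.count_append

theorem parikh_replicate_append (k : ℕ) (a : α) (w : List α) :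
    parikh (replicate k a ++ w) = update (parikh w) a (k + w.count a) := by
  funext b
  rcases eq_or_ne b a with rfl | hb
  · simp [parikh]
  · simp [parikh, hb, List.count_replicate, Ne.symm hb]

theorem perm_iff_parikh_eq {u v : List α} : u ~ v ↔ parikh u = parikh v :=
  List.perm_iff_count.trans funext_iff.symm

theorem parikh_surjective [Fintype α] : Surjective (parikh : List α → α → ℕ) := by
  intro c
  refine ⟨Finset.univ.toList.flatMap fun a => replicate (c a) a, funext fun b => ?_⟩
  simp [parikh, List.count_flatMap, List.count_replicate]

theorem IsCommutativeLang.parikh_mem_image_iff {L : Language α} (hL : IsCommutativeLang L)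
    {w : List α} : parikh w ∈ parikh '' L ↔ w ∈ L :=
  ⟨fun ⟨u, hu, h⟩ => (hL u w (perm_iff_parikh_eq.mpr h)).mp hu, fun h => ⟨w, h, rfl⟩⟩

theorem mem_shuffle_iff_parikh_mem_add {U V : Language α} (hU : IsCommutativeLang U)
    (hV : IsCommutativeLang V) {w : List α} :
    w ∈ Shuffle U V ↔ parikh w ∈ parikh '' U + parikh '' V := by
  constructor
  · rintro ⟨u, hu, v, hv, hs⟩
    rw [perm_iff_parikh_eq.mp hs.perm_append, parikh_append]
    exact Set.add_mem_add ⟨u, hu, rfl⟩ ⟨v, hv, rfl⟩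
  · rw [Set.mem_add]
    rintro ⟨_, ⟨u, hu, rfl⟩, _, ⟨v, hv, rfl⟩, h⟩
    obtain ⟨u', v', hu', hv', hs⟩ :=
      exists_isShuffle_of_perm_append (w := w) (perm_iff_parikh_eq.mpr (by rw [parikh_append, h]))
    exact ⟨u', (hU u' u hu').mpr hu, v', (hV v' v hv').mpr hv, hs⟩

end Parikh

/-- The reading after `k` steps of a counter that runs through `0, …, T + p - 1` and then jumps
back to `T`. -/
def counterState (T p k : ℕ) : ℕ := if k < T then k else T + (k - T) % p

theorem counterState_lt {T p : ℕ} (hp : 0 < p) (k : ℕ) : counterState T p k < T + p := by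
  unfold counterState
  split_ifs
  · omega
  · have := Nat.mod_lt (k - T) hp
    omega

theorem counterState_succ (T p k : ℕ) :
    counterState T p (counterState T p k + 1) = counterState T p (k + 1) := by
  unfold counterState
  by_cases h : k < T
  · rw [if_pos h]
  · rw [if_neg h, if_neg (by omega), if_neg (by omega),
      show T + (k - T) % p + 1 - T = (k - T) % p + 1 by omega, Nat.mod_add_mod,
      show k + 1 - T = k - T + 1 by omega]

theorem counterState_eq_or (T p k : ℕ) :
    counterState T p k = k ∨ T ≤ counterState T p k ∧ T ≤ k ∧ counterState T p k ≡ k [MOD p] := by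
  unfold counterState
  split_ifs with h
  · exact Or.inl rfl
  · refine Or.inr ⟨by omega, by omega, ?_⟩
    calc T + (k - T) % p ≡ T + (k - T) [MOD p] := (Nat.mod_modEq _ _).add_left T
      _ = k := by omega

section CounterDFA

variable {α : Type} [DecidableEq α]

theorem IsEventuallyPeriodicIn.update_counterState_mem_iff {S : Set (α → ℕ)} {a : α} {T p : ℕ}
    (h : IsEventuallyPeriodicIn S a T p) (c : α → ℕ) :
    update c a (counterState T p (c a)) ∈ S ↔ c ∈ S := by
  rcases counterState_eq_or T p (c a) with hc | ⟨h₁, h₂, hmod⟩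
  · rw [hc, update_eq_self]
  · rw [h c _ _ h₁ h₂ hmod, update_eq_self]

theorem mem_iff_of_forall_update_mem_iff {ι β : Type*} [Fintype ι] [DecidableEq ι]
    {S : Set (ι → β)} {f : ι → β → β} (h : ∀ c i, update c i (f i (c i)) ∈ S ↔ c ∈ S)
    (c : ι → β) : (fun i => f i (c i)) ∈ S ↔ c ∈ S := by
  suffices ∀ s : Finset ι, (fun i => if i ∈ s then f i (c i) else c i) ∈ S ↔ c ∈ S by
    simpa using this Finset.univ
  intro s
  induction s using Finset.induction_on with
  | empty => simp
  | insert i s hi ih =>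
    have : (fun j => if j ∈ insert i s then f j (c j) else c j) =
        update (fun j => if j ∈ s then f j (c j) else c j) i (f i (c i)) := by
      funext j
      rcases eq_or_ne j i with rfl | hj
      · simp
      · simp [hj]
    rw [this, ← ih]
    simpa [hi] using h (fun j => if j ∈ s then f j (c j) else c j) i

@[simps]
def counterDFA (S : Set (α → ℕ)) (T p : α → ℕ) (hp : ∀ a, 0 < p a) :
    DFA α (∀ a, Fin (T a + p a)) where
  step s a := update s a ⟨counterState (T a) (p a) (s a + 1), counterState_lt (hp a) _⟩
  start a := ⟨counterState (T a) (p a) 0, counterState_lt (hp a) _⟩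
  accept := {s | (fun a => (s a : ℕ)) ∈ S}

theorem counterDFA_eval (S : Set (α → ℕ)) (T p : α → ℕ) (hp : ∀ a, 0 < p a) (w : List α)
    (a : α) : ((counterDFA S T p hp).eval w a : ℕ) = counterState (T a) (p a) (w.count a) := by
  induction w using List.reverseRecOn generalizing a with
  | nil => rfl
  | append_singleton w b ih =>
    rw [DFA.eval_append_singleton]
    rcases eq_or_ne a b with rfl | hab
    · simp [ih, counterState_succ]
    · simp [ih, hab, hab.symm]

theorem counterDFA_accepts [Fintype α] {S : Set (α → ℕ)} {T p : α → ℕ} (hp : ∀ a, 0 < p a)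
    (hS : ∀ a, IsEventuallyPeriodicIn S a (T a) (p a)) :
    (counterDFA S T p hp).accepts = {w | parikh w ∈ S} := by
  ext w
  simp only [DFA.mem_accepts, counterDFA_accept, Set.mem_ofPred_eq, counterDFA_eval]
  exact mem_iff_of_forall_update_mem_iff (fun c a => (hS a).update_counterState_mem_iff c) (parikh w)

end CounterDFA

theorem DFA.evalFrom_replicate {α σ : Type} (M : DFA α σ) (s : σ) (a : α) (k : ℕ) :
    M.evalFrom s (replicate k a) = (M.step · a)^[k] s := by
  induction k generalizing s with
  | zero => rfl
  | succ k ih => rw [replicate_succ, DFA.evalFrom_cons, ih, iterate_succ_apply]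

theorem IsPermDFA.exists_isEventuallyPeriodicIn {α σ : Type} [Fintype α] [DecidableEq α]
    [Fintype σ] {M : DFA α σ} (hM : IsPermDFA M) (hc : IsCommutativeLang M.accepts) (a : α) :
    ∃ d, 0 < d ∧ d ≤ Fintype.card σ ∧ IsEventuallyPeriodicIn (parikh '' M.accepts) a 0 d := by
  refine ⟨minimalPeriod (M.step · a) M.start,
    minimalPeriod_pos_of_mem_periodicPts ((hM a).injective.mem_periodicPts _),
    minimalPeriod_le_card, fun c k₁ k₂ _ _ hk => ?_⟩
  obtain ⟨w, hw⟩ := parikh_surjective (update c a 0)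
  have hwa : w.count a = 0 := by simpa [parikh] using congrFun hw a
  have key : ∀ k, update c a k ∈ parikh '' M.accepts ↔
      M.evalFrom ((M.step · a)^[k] M.start) w ∈ M.accept := fun k => by
    rw [show update c a k = parikh (replicate k a ++ w) by simp [parikh_replicate_append, hw, hwa],
      hc.parikh_mem_image_iff, DFA.mem_accepts, DFA.eval, DFA.evalFrom_of_append,
      DFA.evalFrom_replicate]
  rw [key, key, ← iterate_mod_minimalPeriod_eq, hk, iterate_mod_minimalPeriod_eq]

/-- the shuffle of commutative group languages recognized by
(permutation) DFAs with `n` and `m` states is recognized by a DFA with at most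
`(n m) ^ k` states, `k` the alphabet size. -/
theorem shuffle_group_state_bound {α : Type} [Fintype α] (k n m : ℕ)
    (hk : Fintype.card α = k) (U V : Language α)
    (hcU : IsCommutativeLang U) (hcV : IsCommutativeLang V)
    (hU : ∃ (σ : Type) (_ : Fintype σ) (M : DFA α σ),
      IsPermDFA M ∧ Fintype.card σ = n ∧ M.accepts = U)
    (hV : ∃ (σ : Type) (_ : Fintype σ) (M : DFA α σ),
      IsPermDFA M ∧ Fintype.card σ = m ∧ M.accepts = V) :
    ∃ (τ : Type) (_ : Fintype τ) (M' : DFA α τ),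
      Fintype.card τ ≤ (n * m) ^ k ∧ M'.accepts = Shuffle U V := by
  classical
  obtain ⟨σ₁, _, M₁, hM₁, rfl, rfl⟩ := hU
  obtain ⟨σ₂, _, M₂, hM₂, rfl, rfl⟩ := hV
  choose d hd hdn hdU using hM₁.exists_isEventuallyPeriodicIn hcU
  choose e he hem heV using hM₂.exists_isEventuallyPeriodicIn hcV
  have hg : ∀ a, 0 < (d a).gcd (e a) := fun a => Nat.gcd_pos_of_pos_left _ (hd a)
  refine ⟨_, inferInstance, counterDFA (parikh '' M₁.accepts + parikh '' M₂.accepts)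
    (fun a => (d a).lcm (e a) + (d a).gcd (e a) - 2) (fun a => (d a).gcd (e a)) hg, ?_, ?_⟩
  · have hcard : ∀ a, (d a).lcm (e a) + (d a).gcd (e a) - 2 + (d a).gcd (e a) ≤
        Fintype.card σ₁ * Fintype.card σ₂ := fun a => by
      have := Nat.lcm_add_two_mul_gcd_le (hd a) (he a)
      have := Nat.mul_le_mul (hdn a) (hem a)
      have := Nat.lcm_pos (hd a) (he a)
      omega
    simpa [hk] using Finset.prod_le_pow_card Finset.univ _ _ fun a _ => hcard a
  · rw [counterDFA_accepts hg fun a => (hdU a).add (heV a) (hd a) (he a)]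
    ext w
    exact (mem_shuffle_iff_parikh_mem_add hcU hcV).symm
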